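/- Let n ≥ 2, let ξ ∈ ℝⁿ be a nonzero vector, and let W : Sⁿ⁻¹ → ℝ be a continuous strictly positive function. Suppose f is a symmetric n×n real matrix and α ∈ ℝⁿ satisfy ∫_{Sⁿ⁻¹ ∩ ξ^⊥} |⟨f ω, ω⟩ + ⟨α, ω⟩|² W(ω) dσ(ω) = 0, where dσ is the surface measure on the (n−2)-sphere Sⁿ⁻¹ ∩ ξ^⊥, together with f ξ = 0 and ⟨α, ξ⟩ = 0. Then f = 0 and α = 0. -/

import Mathlib

/-!
Since `W > 0` and the integrand is continuous and nonnegative, it suffices that the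
`(n - 2)`-dimensional Hausdorff measure of the unit sphere `S` of `ξ^⊥` is finite and charges
every neighbourhood of every point of `S`: then the integrand vanishes on `S`. Both facts come
from writing `S` near each of its points `p` as the graph `u ↦ u + √(1 - ‖u‖²) • p` over `p^⊥`,
a map that does not shrink distances and is Lipschitz away from the equator.

Vanishing of `⟪f ω, ω⟫ + ⟪α, ω⟫` on `S` splits, by evenness and oddness in `ω`, into vanishing
of both terms on `ξ^⊥`. With `α ⊥ ξ` this gives `α = 0`, and with `f ξ = 0` the quadratic form
of the symmetric `f` vanishes on all of `ℝⁿ`, so `f = 0`.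
-/

open MeasureTheory InnerProductSpace Matrix

open Metric Module Topology Filter Set

namespace InnerProductSpace

variable {E : Type*} [NormedAddCommGroup E] [InnerProductSpace ℝ E]

noncomputable def sphereChart (p : E) (u : (ℝ ∙ p)ᗮ) : E := u + √(1 - ‖u‖ ^ 2) • p

variable {p : E}

theorem norm_coe_add_smul_sq (hp : ‖p‖ = 1) (u : (ℝ ∙ p)ᗮ) (t : ℝ) :
    ‖(u : E) + t • p‖ ^ 2 = ‖u‖ ^ 2 + t ^ 2 := by
  have hup : ⟪(u : E), p⟫_ℝ = 0 := Submodule.mem_orthogonal_singleton_iff_inner_left.1 u.2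
  rw [norm_add_sq_real, real_inner_smul_right, hup, norm_smul, hp, Real.norm_eq_abs]
  simp

theorem sphereChart_zero : sphereChart p 0 = p := by simp [sphereChart]

theorem sphereChart_mem_sphere (hp : ‖p‖ = 1) {u : (ℝ ∙ p)ᗮ} (hu : ‖u‖ ≤ 1) :
    sphereChart p u ∈ sphere (0 : E) 1 := by
  have h : ‖sphereChart p u‖ ^ 2 = 1 := by
    rw [sphereChart, norm_coe_add_smul_sq hp, Real.sq_sqrt (by nlinarith [norm_nonneg u])]
    ring
  rw [mem_sphere_zero_iff_norm]
  nlinarith [norm_nonneg (sphereChart p u)]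

theorem continuous_sphereChart : Continuous (sphereChart p) := by
  unfold sphereChart; fun_prop

theorem antilipschitzWith_sphereChart (hp : ‖p‖ = 1) : AntilipschitzWith 1 (sphereChart p) := by
  refine AntilipschitzWith.of_le_mul_dist fun u v => ?_
  have h : sphereChart p u - sphereChart p v
      = ((u - v : (ℝ ∙ p)ᗮ) : E) + (√(1 - ‖u‖ ^ 2) - √(1 - ‖v‖ ^ 2)) • p := by
    simp only [sphereChart, Submodule.coe_sub, sub_smul]; abel
  have hsq := norm_coe_add_smul_sq hp (u - v) (√(1 - ‖u‖ ^ 2) - √(1 - ‖v‖ ^ 2))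
  rw [← h] at hsq
  rw [NNReal.coe_one, one_mul, dist_eq_norm, dist_eq_norm]
  nlinarith [norm_nonneg (u - v), norm_nonneg (sphereChart p u - sphereChart p v),
    sq_nonneg (√(1 - ‖u‖ ^ 2) - √(1 - ‖v‖ ^ 2))]

theorem contDiffOn_sphereChart {r : ℝ} (hr : r < 1) :
    ContDiffOn ℝ 1 (sphereChart p) (closedBall 0 r) := by
  have hsqrt : ContDiffOn ℝ 1 (fun u : (ℝ ∙ p)ᗮ => √(1 - ‖u‖ ^ 2)) (closedBall 0 r) := by
    refine ContDiffOn.sqrt (contDiff_const.sub (contDiff_norm_sq ℝ)).contDiffOn fun u hu => ?_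
    rw [mem_closedBall_zero_iff] at hu
    nlinarith [norm_nonneg u]
  exact ((ℝ ∙ p)ᗮ.subtypeL.contDiff.contDiffOn).add (hsqrt.smul contDiffOn_const)

-- On this cap `‖u‖² = 1 - ⟪x, p⟫² < 3 / 4 < (9 / 10)²`, which keeps the chart off the equator,
-- where `√(1 - ‖u‖²)` stops being Lipschitz.
theorem sphere_inter_subset_image_sphereChart (hp : ‖p‖ = 1) :
    sphere (0 : E) 1 ∩ {x | 1 / 2 < ⟪x, p⟫_ℝ} ⊆ sphereChart p '' closedBall 0 (9 / 10) := by
  rintro x ⟨hx, hxp : 1 / 2 < ⟪x, p⟫_ℝ⟩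
  rw [mem_sphere_zero_iff_norm] at hx
  set c := ⟪x, p⟫_ℝ
  have hu : x - c • p ∈ (ℝ ∙ p)ᗮ := by
    rw [Submodule.mem_orthogonal_singleton_iff_inner_left, inner_sub_left, real_inner_smul_left,
      real_inner_self_eq_norm_sq, hp]
    ring
  set u : (ℝ ∙ p)ᗮ := ⟨x - c • p, hu⟩
  have hnorm : ‖u‖ ^ 2 + c ^ 2 = 1 := by
    rw [← norm_coe_add_smul_sq hp u c]
    simp [u, hx]
  refine ⟨u, ?_, ?_⟩
  · rw [mem_closedBall_zero_iff]
    nlinarith [norm_nonneg u]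
  · have hc : √(1 - ‖u‖ ^ 2) = c := by
      rw [show 1 - ‖u‖ ^ 2 = c ^ 2 by linarith, Real.sqrt_sq (by linarith)]
    change (u : E) + √(1 - ‖u‖ ^ 2) • p = x
    rw [hc]
    simp [u]

theorem finrank_orthogonal_span_singleton_of_norm_eq_one {k : ℕ} (hk : finrank ℝ E = k + 1)
    (hp : ‖p‖ = 1) : finrank ℝ (ℝ ∙ p)ᗮ = k := by
  have : Fact (finrank ℝ E = k + 1) := ⟨hk⟩
  exact Submodule.finrank_orthogonal_span_singleton (by rintro rfl; simp at hp)

variable [FiniteDimensional ℝ E] [MeasurableSpace E] [BorelSpace E] {k : ℕ}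

theorem hausdorffMeasure_inter_sphere_pos (hk : finrank ℝ E = k + 1) (hp : p ∈ sphere (0 : E) 1)
    {t : Set E} (ht : t ∈ 𝓝 p) : 0 < μH[k] (t ∩ sphere 0 1) := by
  rw [mem_sphere_zero_iff_norm] at hp
  have hU := finrank_orthogonal_span_singleton_of_norm_eq_one hk hp
  set A := sphereChart p ⁻¹' t ∩ ball 0 1
  have hA : A ∈ 𝓝 0 := inter_mem
    (continuous_sphereChart.continuousAt.preimage_mem_nhds (by rwa [sphereChart_zero]))
    (ball_mem_nhds 0 one_pos)
  have hApos : 0 < μH[k] A := by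
    rw [← hU]; exact Measure.measure_pos_of_mem_nhds _ hA
  have hsub : sphereChart p '' A ⊆ t ∩ sphere 0 1 := by
    rintro _ ⟨u, ⟨hut, hu⟩, rfl⟩
    exact ⟨hut, sphereChart_mem_sphere hp (mem_ball_zero_iff.1 hu).le⟩
  calc 0 < μH[k] A := hApos
    _ ≤ μH[k] (sphereChart p '' A) := by
      simpa using (antilipschitzWith_sphereChart hp).le_hausdorffMeasure_image (Nat.cast_nonneg k) A
    _ ≤ μH[k] (t ∩ sphere 0 1) := measure_mono hsub

theorem hausdorffMeasure_sphere_lt_top (hk : finrank ℝ E = k + 1) :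
    μH[k] (sphere (0 : E) 1) < ⊤ := by
  refine (isCompact_sphere 0 1).measure_lt_top_of_nhdsWithin fun p hp => ?_
  rw [mem_sphere_zero_iff_norm] at hp
  have hU := finrank_orthogonal_span_singleton_of_norm_eq_one hk hp
  obtain ⟨K, hK⟩ := (contDiffOn_sphereChart (p := p) (by norm_num : (9 / 10 : ℝ) < 1))
    |>.exists_lipschitzOnWith one_ne_zero (convex_closedBall 0 _) (isCompact_closedBall 0 _)
  have hcap : {x | 1 / 2 < ⟪x, p⟫_ℝ} ∈ 𝓝 p :=
    (isOpen_lt continuous_const (continuous_id.inner continuous_const)).mem_nhds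
      (by simp [hp]; norm_num)
  refine ⟨_, inter_mem_nhdsWithin _ hcap, ?_⟩
  calc μH[k] (sphere (0 : E) 1 ∩ {x | 1 / 2 < ⟪x, p⟫_ℝ})
      ≤ μH[k] (sphereChart p '' closedBall 0 (9 / 10)) :=
        measure_mono (sphere_inter_subset_image_sphereChart hp)
    _ ≤ K ^ (k : ℝ) * μH[k] (closedBall (0 : (ℝ ∙ p)ᗮ) (9 / 10)) :=
        hK.hausdorffMeasure_image_le (Nat.cast_nonneg k)
    _ < ⊤ := by
      refine ENNReal.mul_lt_top (by simp) ?_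
      rw [← hU]; exact measure_closedBall_lt_top

end InnerProductSpace

theorem Continuous.eq_of_ae_eq_const_of_mem_support {X Y : Type*} [TopologicalSpace X]
    [MeasurableSpace X] [TopologicalSpace Y] [T1Space Y] {μ : Measure X} {g : X → Y} {c : Y}
    (hg : Continuous g) (h : ∀ᵐ x ∂μ, g x = c) {x : X} (hx : x ∈ μ.support) : g x = c := by
  by_contra hne
  have hpos := (Measure.mem_support_iff_forall x).1 hx _
    ((isOpen_compl_singleton.preimage hg).mem_nhds hne)
  exact hpos.ne' (ae_iff.1 h)

namespace Submodule

variable {F : Type*} [NormedAddCommGroup F] [InnerProductSpace ℝ F] [MeasurableSpace F]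
  [BorelSpace F] (V : Submodule ℝ F) [FiniteDimensional ℝ V] {k : ℕ}

theorem hausdorffMeasure_image_sphere_lt_top (hk : finrank ℝ V = k + 1) :
    μH[k] ((↑) '' sphere (0 : V) 1 : Set F) < ⊤ := by
  rw [isometry_subtype_coe.hausdorffMeasure_image (Or.inl (Nat.cast_nonneg k))]
  exact hausdorffMeasure_sphere_lt_top hk

theorem image_sphere_subset_support (hk : finrank ℝ V = k + 1) :
    ((↑) '' sphere (0 : V) 1 : Set F) ⊆ (μH[k].restrict ((↑) '' sphere (0 : V) 1)).support := by
  rintro _ ⟨x, hx, rfl⟩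
  refine (Measure.mem_support_iff_forall _).2 fun t ht => ?_
  calc 0 < μH[k] ((↑) ⁻¹' t ∩ sphere (0 : V) 1) := hausdorffMeasure_inter_sphere_pos hk hx
        (continuous_subtype_val.continuousAt.preimage_mem_nhds ht)
    _ = μH[k] (t ∩ (↑) '' sphere (0 : V) 1) := by
        rw [← isometry_subtype_coe.hausdorffMeasure_image (Or.inl (Nat.cast_nonneg k))]
        exact congrArg _ (image_preimage_inter _ _ _)
    _ ≤ μH[k].restrict ((↑) '' sphere (0 : V) 1) t := Measure.le_restrict_apply _ _

theorem eq_zero_of_setIntegral_image_sphere_eq_zero (hk : finrank ℝ V = k + 1) {g : F → ℝ}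
    (hg : Continuous g) (hg0 : 0 ≤ g) (h : ∫ x in (↑) '' sphere (0 : V) 1, g x ∂μH[k] = 0) :
    ∀ x ∈ ((↑) '' sphere (0 : V) 1 : Set F), g x = 0 := by
  have hS : IsCompact ((↑) '' sphere (0 : V) 1 : Set F) :=
    (isCompact_sphere 0 1).image continuous_subtype_val
  have hint : IntegrableOn g ((↑) '' sphere (0 : V) 1) μH[k] :=
    hg.continuousOn.integrableOn_of_subset_isCompact hS hS.isClosed.measurableSet subset_rfl
      (V.hausdorffMeasure_image_sphere_lt_top hk).ne
  have hae := (integral_eq_zero_iff_of_nonneg hg0 hint).1 h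
  exact fun x hx => hg.eq_of_ae_eq_const_of_mem_support hae (V.image_sphere_subset_support hk hx)

end Submodule

namespace LinearMap

variable {E : Type*} [NormedAddCommGroup E] [InnerProductSpace ℝ E] {T : E →ₗ[ℝ] E} {a : E}

theorem inner_map_self_eq_zero_and_inner_eq_zero_of_norm_eq_one (K : Submodule ℝ E)
    (h : ∀ ω ∈ K, ‖ω‖ = 1 → ⟪T ω, ω⟫_ℝ + ⟪a, ω⟫_ℝ = 0) :
    ∀ v ∈ K, ⟪T v, v⟫_ℝ = 0 ∧ ⟪a, v⟫_ℝ = 0 := by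
  intro v hv
  rcases eq_or_ne v 0 with rfl | hv0
  · simp
  set c := ‖v‖⁻¹
  have hc : c ≠ 0 := inv_ne_zero (norm_ne_zero_iff.2 hv0)
  have hunit : ‖c • v‖ = 1 := norm_smul_inv_norm hv0
  -- the form `ω ↦ ⟪T ω, ω⟫` is even and `ω ↦ ⟪a, ω⟫` is odd, so testing at `±c • v` separates them
  have hpos := h _ (K.smul_mem c hv) hunit
  have hneg := h _ (K.smul_mem (-c) hv) (by rwa [neg_smul, norm_neg])
  simp only [map_smul, inner_smul_left, inner_smul_right, RCLike.conj_to_real] at hpos hneg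
  constructor
  · have : c * c * ⟪T v, v⟫_ℝ = 0 := by linarith
    simpa [hc] using this
  · have : c * ⟪a, v⟫_ℝ = 0 := by linarith
    simpa [hc] using this

theorem IsSymmetric.eq_zero_of_inner_map_self_orthogonal_eq_zero (hT : T.IsSymmetric) {ξ : E}
    (hTξ : T ξ = 0) (h : ∀ v ∈ (ℝ ∙ ξ)ᗮ, ⟪T v, v⟫_ℝ = 0) : T = 0 := by
  refine hT.inner_map_self_eq_zero.1 fun x => ?_
  have hx : x ∈ (ℝ ∙ ξ) ⊔ (ℝ ∙ ξ)ᗮ := by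
    rw [Submodule.sup_orthogonal_of_hasOrthogonalProjection]; trivial
  obtain ⟨y, hy, v, hv, rfl⟩ := Submodule.mem_sup.1 hx
  obtain ⟨c, rfl⟩ := Submodule.mem_span_singleton.1 hy
  have hvξ : ⟪T v, ξ⟫_ℝ = 0 := by rw [hT, hTξ, inner_zero_right]
  simp [hTξ, inner_add_right, inner_smul_right, hvξ, h v hv]

theorem IsSymmetric.eq_zero_and_eq_zero_of_inner_map_self_add_inner_eq_zero (hT : T.IsSymmetric)
    {ξ : E} (hTξ : T ξ = 0) (haξ : ⟪a, ξ⟫_ℝ = 0)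
    (h : ∀ ω ∈ (ℝ ∙ ξ)ᗮ, ‖ω‖ = 1 → ⟪T ω, ω⟫_ℝ + ⟪a, ω⟫_ℝ = 0) : T = 0 ∧ a = 0 := by
  have hvanish := inner_map_self_eq_zero_and_inner_eq_zero_of_norm_eq_one _ h
  refine ⟨hT.eq_zero_of_inner_map_self_orthogonal_eq_zero hTξ fun v hv => (hvanish v hv).1, ?_⟩
  have ha : a ∈ (ℝ ∙ ξ)ᗮ := Submodule.mem_orthogonal_singleton_iff_inner_left.2 haξ
  exact inner_self_eq_zero.1 (hvanish a ha).2

end LinearMap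

theorem Matrix.mulVec_dotProduct_eq_inner_toEuclideanLin {n : Type*} [Fintype n] [DecidableEq n]
    (f : Matrix n n ℝ) (x : EuclideanSpace ℝ n) :
    f.mulVec x ⬝ᵥ (x : n → ℝ) = ⟪f.toEuclideanLin x, x⟫_ℝ := by
  rw [EuclideanSpace.inner_eq_star_dotProduct, star_trivial, dotProduct_comm]
  rfl

theorem stmt_11 (n : ℕ) (hn : 2 ≤ n)
    (ξ : EuclideanSpace ℝ (Fin n)) (hξ : ξ ≠ 0)
    (W : EuclideanSpace ℝ (Fin n) → ℝ) (hWcont : Continuous W) (hWpos : ∀ ω, 0 < W ω)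
    (f : Matrix (Fin n) (Fin n) ℝ) (hf : f.IsSymm) (α : EuclideanSpace ℝ (Fin n))
    (hint : ∫ ω in {ω : EuclideanSpace ℝ (Fin n) | ‖ω‖ = 1 ∧ ⟪ω, ξ⟫_ℝ = 0},
        (f.mulVec ω ⬝ᵥ (ω : Fin n → ℝ) + ⟪α, ω⟫_ℝ) ^ 2 * W ω
        ∂(MeasureTheory.Measure.hausdorffMeasure ((n : ℝ) - 2)) = 0)
    (hfξ : f.mulVec ξ = 0) (hαξ : ⟪α, ξ⟫_ℝ = 0) :
    f = 0 ∧ α = 0 := by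
  have hdim : ((n : ℝ) - 2) = (n - 2 : ℕ) := by rw [Nat.cast_sub hn, Nat.cast_ofNat]
  have hV : finrank ℝ (ℝ ∙ ξ)ᗮ = (n - 2) + 1 := by
    have : Fact (finrank ℝ (EuclideanSpace ℝ (Fin n)) = (n - 1) + 1) := ⟨by simp; omega⟩
    rw [Submodule.finrank_orthogonal_span_singleton (n := n - 1) hξ]; omega
  have hS : {ω : EuclideanSpace ℝ (Fin n) | ‖ω‖ = 1 ∧ ⟪ω, ξ⟫_ℝ = 0}
      = (↑) '' sphere (0 : (ℝ ∙ ξ)ᗮ) 1 := by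
    ext ω
    simp [Submodule.mem_orthogonal_singleton_iff_inner_left, and_comm]
  set T := f.toEuclideanLin
  simp only [mulVec_dotProduct_eq_inner_toEuclideanLin, hdim, hS] at hint
  have hg : Continuous fun ω => (⟪T ω, ω⟫_ℝ + ⟪α, ω⟫_ℝ) ^ 2 * W ω := by
    have := T.continuous_of_finiteDimensional
    fun_prop
  have hvanish := (ℝ ∙ ξ)ᗮ.eq_zero_of_setIntegral_image_sphere_eq_zero hV hg
    (fun ω => mul_nonneg (sq_nonneg _) (hWpos ω).le) hint
  have hT : T.IsSymmetric := isSymmetric_toEuclideanLin_iff.2 (isHermitian_iff_isSymm.2 hf)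
  have hTξ : T ξ = 0 := by ext i; exact congrFun hfξ i
  obtain ⟨hT0, hα⟩ := hT.eq_zero_and_eq_zero_of_inner_map_self_add_inner_eq_zero hTξ hαξ
    fun ω hω hω1 => by
      have := hvanish ω ⟨⟨ω, hω⟩, by simpa using hω1, rfl⟩
      simpa [(hWpos ω).ne'] using this
  exact ⟨toEuclideanLin.map_eq_zero_iff.1 hT0, hα⟩
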